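/- arXiv:1309.5604 — 6 statements merged into one kernel-verified Lean document; each statement's English description precedes it below -/
import Mathlib

section
/- Let A be an n×n nonnegative matrix with all row sums positive. Then the spectral radius of A satisfies min_{1≤i≤n} m_i(A) ≤ ρ(A) ≤ max_{1≤i≤n} m_i(A), where m_i(A) is the i-th average 2-row sum of A. -/
open Matrix BigOperators Finset

noncomputable def rowSum {n : ℕ} (A : Matrix (Fin n) (Fin n) ℝ) (i : Fin n) : ℝ :=
  ∑ j, A i j

noncomputable def avg2 {n : ℕ} (A : Matrix (Fin n) (Fin n) ℝ) (i : Fin n) : ℝ :=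
  (∑ k, A i k * rowSum A k) / rowSum A i

noncomputable def specRad {n : ℕ} (A : Matrix (Fin n) (Fin n) ℝ) : ℝ :=
  sSup {x : ℝ | ∃ μ ∈ spectrum ℂ (A.map Complex.ofReal), x = ‖μ‖}

/-!
Conjugating `A` by `D = diagonal (rowSum A)` gives `B = D⁻¹ A D`, which has the spectrum of `A`,
is again nonnegative, and has `i`-th row sum `m_i(A)`. For a nonnegative matrix the spectral
radius lies between the extreme row sums: it is at most the `∞`-operator norm, which is the
largest row sum, and by Gelfand's formula it is at least `s` whenever every row sum of `B ^ k`
is at least `s ^ k`, as happens for `s` the smallest row sum.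
-/

open scoped NNReal ENNReal

theorem le_spectralRadius_of_pow_le_nnnorm_pow {A : Type*} [NormedRing A] [NormedAlgebra ℂ A]
    [CompleteSpace A] {a : A} {t : ℝ≥0} (h : ∀ k, t ^ k ≤ ‖a ^ k‖₊) :
    (t : ℝ≥0∞) ≤ spectralRadius ℂ a := by
  refine ge_of_tendsto (spectrum.pow_nnnorm_pow_one_div_tendsto_nhds_spectralRadius a) ?_
  filter_upwards [Filter.eventually_ne_atTop 0] with k hk
  calc (t : ℝ≥0∞) = ((t : ℝ≥0∞) ^ k) ^ (1 / k : ℝ) := by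
        rw [one_div, ENNReal.pow_rpow_inv_natCast hk]
    _ ≤ (‖a ^ k‖₊ : ℝ≥0∞) ^ (1 / k : ℝ) := by
        gcongr
        exact_mod_cast h k

namespace Matrix

variable {ι K : Type*} [Fintype ι] [DecidableEq ι] [Field K]

theorem spectrum_diagonal_inv_mul_mul_diagonal {d : ι → K} (hd : ∀ i, d i ≠ 0)
    (M : Matrix ι ι K) : spectrum K (diagonal d⁻¹ * M * diagonal d) = spectrum K M :=
  let u : (Matrix ι ι K)ˣ :=
    { val := diagonal d
      inv := diagonal d⁻¹
      val_inv := by simp [diagonal_mul_diagonal, mul_inv_cancel₀ (hd _)]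
      inv_val := by simp [diagonal_mul_diagonal, inv_mul_cancel₀ (hd _)] }
  spectrum.units_conjugate' (u := u)

end Matrix

section RowSum

variable {n : ℕ}

theorem rowSum_mul (A B : Matrix (Fin n) (Fin n) ℝ) (i : Fin n) :
    rowSum (A * B) i = ∑ l, A i l * rowSum B l := by
  simp only [rowSum, mul_apply, Finset.mul_sum]
  exact Finset.sum_comm

theorem rowSum_nonneg {A : Matrix (Fin n) (Fin n) ℝ} (hA : ∀ i j, 0 ≤ A i j) (i : Fin n) :
    0 ≤ rowSum A i :=
  Finset.sum_nonneg fun j _ => hA i j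

theorem pow_le_rowSum_pow {A : Matrix (Fin n) (Fin n) ℝ} (hA : ∀ i j, 0 ≤ A i j) {s : ℝ}
    (hs₀ : 0 ≤ s) (hs : ∀ i, s ≤ rowSum A i) (k : ℕ) (i : Fin n) :
    s ^ k ≤ rowSum (A ^ k) i := by
  induction k generalizing i with
  | zero => simp [rowSum, one_apply]
  | succ k ih =>
    calc s ^ (k + 1) = s * s ^ k := pow_succ' s k
      _ ≤ rowSum A i * s ^ k := by gcongr; exact hs i
      _ = ∑ l, A i l * s ^ k := Finset.sum_mul _ _ _
      _ ≤ ∑ l, A i l * rowSum (A ^ k) l := by gcongr with l; exacts [hA i l, ih l]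
      _ = rowSum (A ^ (k + 1)) i := by rw [pow_succ', rowSum_mul]

theorem specRad_nonneg (A : Matrix (Fin n) (Fin n) ℝ) : 0 ≤ specRad A :=
  Real.sSup_nonneg <| by rintro _ ⟨μ, -, rfl⟩; exact norm_nonneg μ

section LinftyOpNorm

attribute [local instance] Matrix.linftyOpNormedAddCommGroup Matrix.linftyOpNormedRing
  Matrix.linftyOpNormedAlgebra

theorem rowSum_le_linfty_opNorm (A : Matrix (Fin n) (Fin n) ℝ) (i : Fin n) :
    rowSum A i ≤ ‖A‖ := by
  rw [linfty_opNorm_def]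
  calc rowSum A i ≤ ∑ j, ‖A i j‖ := Finset.sum_le_sum fun j _ => Real.le_norm_self _
    _ = ((∑ j, ‖A i j‖₊ : ℝ≥0) : ℝ) := by push_cast; rfl
    _ ≤ _ := NNReal.coe_le_coe.2 <| Finset.le_sup (f := fun i => ∑ j, ‖A i j‖₊) (mem_univ i)

theorem linfty_opNorm_le_of_rowSum_le {A : Matrix (Fin n) (Fin n) ℝ} (hA : ∀ i j, 0 ≤ A i j)
    {c : ℝ} (hc₀ : 0 ≤ c) (hc : ∀ i, rowSum A i ≤ c) : ‖A‖ ≤ c := by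
  rw [linfty_opNorm_def, ← NNReal.coe_mk c hc₀, NNReal.coe_le_coe]
  refine Finset.sup_le fun i _ => ?_
  rw [← NNReal.coe_le_coe]
  push_cast
  simpa only [rowSum, Real.norm_of_nonneg (hA i _)] using hc i

theorem linfty_opNorm_map_ofReal (A : Matrix (Fin n) (Fin n) ℝ) :
    ‖A.map Complex.ofReal‖ = ‖A‖ := by
  simp [linfty_opNorm_def]

variable [NeZero n]

theorem ofReal_specRad (A : Matrix (Fin n) (Fin n) ℝ) :
    ENNReal.ofReal (specRad A) = spectralRadius ℂ (A.map Complex.ofReal) := by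
  obtain ⟨z, hz, hzρ⟩ := spectrum.exists_nnnorm_eq_spectralRadius (A.map Complex.ofReal)
  have hmax : IsGreatest {x : ℝ | ∃ μ ∈ spectrum ℂ (A.map Complex.ofReal), x = ‖μ‖} ‖z‖ := by
    refine ⟨⟨z, hz, rfl⟩, ?_⟩
    rintro _ ⟨μ, hμ, rfl⟩
    have : (‖μ‖₊ : ℝ≥0∞) ≤ ‖z‖₊ := hzρ ▸ le_iSup₂ (f := fun k _ => (‖k‖₊ : ℝ≥0∞)) μ hμ
    exact_mod_cast this
  rw [specRad, hmax.csSup_eq, ← hzρ, ofReal_norm, enorm_eq_nnnorm]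

theorem specRad_le_sup'_rowSum {A : Matrix (Fin n) (Fin n) ℝ} (hA : ∀ i j, 0 ≤ A i j) :
    specRad A ≤ univ.sup' univ_nonempty (rowSum A) := by
  set c := univ.sup' univ_nonempty (rowSum A)
  have hc : ∀ i, rowSum A i ≤ c := fun i => le_sup' _ (mem_univ i)
  have hc₀ : 0 ≤ c := (rowSum_nonneg hA 0).trans (hc 0)
  rw [← ENNReal.ofReal_le_ofReal_iff hc₀, ofReal_specRad]
  calc spectralRadius ℂ (A.map Complex.ofReal) ≤ ‖A.map Complex.ofReal‖₊ :=
        spectrum.spectralRadius_le_nnnorm _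
    _ = ENNReal.ofReal ‖A‖ := by rw [← linfty_opNorm_map_ofReal, ofReal_norm, enorm_eq_nnnorm]
    _ ≤ ENNReal.ofReal c := ENNReal.ofReal_le_ofReal (linfty_opNorm_le_of_rowSum_le hA hc₀ hc)

theorem inf'_rowSum_le_specRad {A : Matrix (Fin n) (Fin n) ℝ} (hA : ∀ i j, 0 ≤ A i j) :
    univ.inf' univ_nonempty (rowSum A) ≤ specRad A := by
  set s := univ.inf' univ_nonempty (rowSum A)
  rcases le_or_gt s 0 with hs₀ | hs₀
  · exact hs₀.trans (specRad_nonneg A)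
  have hs : ∀ i, s ≤ rowSum A i := fun i => inf'_le _ (mem_univ i)
  rw [← ENNReal.ofReal_le_ofReal_iff (specRad_nonneg A), ofReal_specRad]
  refine le_spectralRadius_of_pow_le_nnnorm_pow fun k => ?_
  have hpow : A.map Complex.ofReal ^ k = (A ^ k).map Complex.ofReal :=
    (map_pow Complex.ofRealHom.mapMatrix A k).symm
  rw [← NNReal.coe_le_coe, NNReal.coe_pow, Real.coe_toNNReal _ hs₀.le, coe_nnnorm, hpow,
    linfty_opNorm_map_ofReal]
  exact (pow_le_rowSum_pow hA hs₀.le hs k 0).trans (rowSum_le_linfty_opNorm _ 0)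

end LinftyOpNorm

end RowSum

section DiagonalSimilarity

variable {n : ℕ} (A : Matrix (Fin n) (Fin n) ℝ) {d : Fin n → ℝ}

theorem diagonal_inv_mul_mul_diagonal_apply (i j : Fin n) :
    (diagonal d⁻¹ * A * diagonal d) i j = (d i)⁻¹ * A i j * d j := by
  simp [mul_diagonal, diagonal_mul]

theorem rowSum_diagonal_inv_mul_mul_diagonal (i : Fin n) :
    rowSum (diagonal d⁻¹ * A * diagonal d) i = (∑ k, A i k * d k) / d i := by
  simp only [rowSum, diagonal_inv_mul_mul_diagonal_apply, div_eq_inv_mul, mul_sum, mul_assoc]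

theorem specRad_diagonal_inv_mul_mul_diagonal (hd : ∀ i, d i ≠ 0) :
    specRad (diagonal d⁻¹ * A * diagonal d) = specRad A := by
  have hmap : (diagonal d⁻¹ * A * diagonal d).map Complex.ofReal =
      diagonal (fun i => (d i : ℂ))⁻¹ * A.map Complex.ofReal * diagonal (fun i => (d i : ℂ)) := by
    ext i j
    simp [mul_diagonal, diagonal_mul]
  rw [specRad, specRad, hmap,
    spectrum_diagonal_inv_mul_mul_diagonal fun i => Complex.ofReal_ne_zero.2 (hd i)]

end DiagonalSimilarity

theorem stmt0 {n : ℕ} [NeZero n] (A : Matrix (Fin n) (Fin n) ℝ)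
    (hA : ∀ i j, 0 ≤ A i j) (hr : ∀ i, 0 < rowSum A i) :
    Finset.univ.inf' Finset.univ_nonempty (avg2 A) ≤ specRad A ∧
      specRad A ≤ Finset.univ.sup' Finset.univ_nonempty (avg2 A) := by
  have hB : ∀ i j, 0 ≤ (diagonal (rowSum A)⁻¹ * A * diagonal (rowSum A)) i j := fun i j => by
    rw [diagonal_inv_mul_mul_diagonal_apply]
    exact mul_nonneg (mul_nonneg (inv_nonneg.2 (hr i).le) (hA i j)) (hr j).le
  have hrow : rowSum (diagonal (rowSum A)⁻¹ * A * diagonal (rowSum A)) = avg2 A :=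
    funext (rowSum_diagonal_inv_mul_mul_diagonal A)
  rw [← hrow, ← specRad_diagonal_inv_mul_mul_diagonal A fun i => (hr i).ne']
  exact ⟨inf'_rowSum_le_specRad hB, specRad_le_sup'_rowSum hB⟩
end

section
/- Let A be an n×n irreducible nonnegative matrix with all row sums positive. If ρ(A) = min_{1≤i≤n} m_i(A) or ρ(A) = max_{1≤i≤n} m_i(A), then m_1(A) = m_2(A) = ... = m_n(A); conversely, if all average 2-row sums are equal, then ρ(A) equals their common value. -/
open Matrix BigOperators Finset

def MatIrreducible {n : ℕ} (A : Matrix (Fin n) (Fin n) ℝ) : Prop :=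
  ∀ i j : Fin n, ∃ k : ℕ, 0 < k ∧ 0 < (A ^ k) i j

/-!
Write `r` for the vector of row sums; then `(A r)ᵢ = mᵢ rᵢ`, so `(min m) r ≤ A r ≤ (max m) r`.
Two Collatz–Wielandt bounds hold for a positive vector `x`: if `A x ≤ c x`, every eigenvalue has
modulus at most `c` (compare `|v|` with `x` at an index maximising `|vᵢ| / xᵢ`); if `d x ≤ A x`,
then `‖Aᵏ‖ ≥ dᵏ`, so `ρ(A) ≥ d` by Gelfand's formula. For irreducible `A`, some
`S = ∑_{k<K} Aᵏ` is entrywise positive and commutes with `A`. If `c r ≤ A r` but `A r ≠ c r`,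
then `z = S r` satisfies `c z < A z` in every entry, whence `ρ(A) > c`; symmetrically for `≥`.
So `ρ(A) = min m` or `ρ(A) = max m` forces `A r = c r`, i.e. all `mᵢ` are equal; conversely,
`A r = c r` makes `c` an eigenvalue of maximal modulus.
-/

open Filter

attribute [local instance] Matrix.linftyOpNormedRing Matrix.linftyOpNormedAlgebra

section

variable {ι : Type*} [Fintype ι]

theorem exists_gt_smul_le [Nonempty ι] {x y : ι → ℝ} (hx : ∀ i, 0 < x i) {d : ℝ}
    (h : ∀ i, d * x i < y i) : ∃ d' > d, d' • x ≤ y := by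
  obtain ⟨i₀, -, hi₀⟩ := Finset.univ.exists_min_image (fun i => y i / x i) Finset.univ_nonempty
  refine ⟨y i₀ / x i₀, (lt_div_iff₀ (hx i₀)).2 (h i₀), fun i => ?_⟩
  simpa [← le_div_iff₀ (hx i)] using hi₀ i (Finset.mem_univ i)

theorem exists_lt_le_smul [Nonempty ι] {x y : ι → ℝ} (hx : ∀ i, 0 < x i) {c : ℝ}
    (h : ∀ i, y i < c * x i) : ∃ c' < c, y ≤ c' • x := by
  obtain ⟨i₀, -, hi₀⟩ := Finset.univ.exists_max_image (fun i => y i / x i) Finset.univ_nonempty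
  refine ⟨y i₀ / x i₀, (div_lt_iff₀ (hx i₀)).2 (h i₀), fun i => ?_⟩
  simpa [← div_le_iff₀ (hx i)] using hi₀ i (Finset.mem_univ i)

end

namespace Matrix

variable {ι : Type*} [Fintype ι]

theorem mem_spectrum_iff_exists_mulVec_eq_smul [DecidableEq ι] {K : Type*} [Field K]
    (B : Matrix ι ι K) (μ : K) :
    μ ∈ spectrum K B ↔ ∃ v ≠ 0, B *ᵥ v = μ • v := by
  rw [← spectrum_toLin', ← Module.End.hasEigenvalue_iff_mem_spectrum]
  constructor
  · intro h
    obtain ⟨v, hv, hv0⟩ := h.exists_hasEigenvector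
    exact ⟨v, hv0, by simpa using Module.End.mem_eigenspace_iff.mp hv⟩
  · rintro ⟨v, hv0, hv⟩
    exact Module.End.hasEigenvalue_of_hasEigenvector
      ⟨Module.End.mem_eigenspace_iff.mpr (by simpa using hv), hv0⟩

variable {B : Matrix ι ι ℝ}

theorem mulVec_mono_of_nonneg (hB : ∀ i j, 0 ≤ B i j) {x y : ι → ℝ} (h : x ≤ y) :
    B *ᵥ x ≤ B *ᵥ y :=
  fun i => Finset.sum_le_sum fun j _ => mul_le_mul_of_nonneg_left (h j) (hB i j)

theorem pow_smul_le_pow_mulVec [DecidableEq ι] (hB : ∀ i j, 0 ≤ B i j) {x : ι → ℝ} {d : ℝ}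
    (hd : 0 ≤ d) (h : d • x ≤ B *ᵥ x) (k : ℕ) : d ^ k • x ≤ (B ^ k) *ᵥ x := by
  induction k with
  | zero => simp
  | succ k ih =>
    calc d ^ (k + 1) • x = d • d ^ k • x := by rw [pow_succ', mul_smul]
      _ ≤ d • ((B ^ k) *ᵥ x) := smul_le_smul_of_nonneg_left ih hd
      _ = (B ^ k) *ᵥ (d • x) := (mulVec_smul _ _ _).symm
      _ ≤ (B ^ k) *ᵥ (B *ᵥ x) := mulVec_mono_of_nonneg (pow_apply_nonneg hB k) h
      _ = (B ^ (k + 1)) *ᵥ x := by rw [mulVec_mulVec, pow_succ]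

theorem map_ofReal_pow [DecidableEq ι] (k : ℕ) :
    B.map Complex.ofReal ^ k = (B ^ k).map Complex.ofReal :=
  (map_pow Complex.ofRealHom.mapMatrix B k).symm

theorem norm_smul_norm_le_mulVec_norm (hB : ∀ i j, 0 ≤ B i j) {μ : ℂ} {v : ι → ℂ}
    (hv : B.map Complex.ofReal *ᵥ v = μ • v) :
    ‖μ‖ • (fun i => ‖v i‖) ≤ B *ᵥ fun i => ‖v i‖ := by
  intro i
  calc ‖μ‖ * ‖v i‖ = ‖∑ j, (B i j : ℂ) * v j‖ := by
        rw [← norm_mul, ← smul_eq_mul, ← Pi.smul_apply, ← hv]; rfl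
    _ ≤ ∑ j, ‖(B i j : ℂ) * v j‖ := norm_sum_le _ _
    _ = (B *ᵥ fun i => ‖v i‖) i := by
        simp [mulVec, dotProduct, Complex.norm_real, abs_of_nonneg (hB i _)]

theorem norm_le_of_mulVec_le_smul [DecidableEq ι] (hB : ∀ i j, 0 ≤ B i j) {x : ι → ℝ}
    (hx : ∀ i, 0 < x i) {c : ℝ} (h : B *ᵥ x ≤ c • x) {μ : ℂ}
    (hμ : μ ∈ spectrum ℂ (B.map Complex.ofReal)) : ‖μ‖ ≤ c := by
  obtain ⟨v, hv0, hv⟩ := (mem_spectrum_iff_exists_mulVec_eq_smul _ μ).1 hμ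
  obtain ⟨j, hj⟩ := Function.ne_iff.1 hv0
  have : Nonempty ι := ⟨j⟩
  set w : ι → ℝ := fun i => ‖v i‖
  obtain ⟨i₀, -, hi₀⟩ := Finset.univ.exists_max_image (fun i => w i / x i) Finset.univ_nonempty
  set t := w i₀ / x i₀
  have hwt : w ≤ t • x := fun i => by
    simpa [← div_le_iff₀ (hx i)] using hi₀ i (Finset.mem_univ i)
  have hw₀ : w i₀ = t * x i₀ := (div_mul_cancel₀ _ (hx i₀).ne').symm
  have ht : 0 < t :=
    (div_pos (norm_pos_iff.2 hj) (hx j)).trans_le (hi₀ j (Finset.mem_univ j))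
  have key : ‖μ‖ * (t * x i₀) ≤ c * (t * x i₀) :=
    calc ‖μ‖ * (t * x i₀) = ‖μ‖ * w i₀ := by rw [hw₀]
      _ ≤ (B *ᵥ w) i₀ := norm_smul_norm_le_mulVec_norm hB hv i₀
      _ ≤ (B *ᵥ (t • x)) i₀ := mulVec_mono_of_nonneg hB hwt i₀
      _ = t * (B *ᵥ x) i₀ := by rw [mulVec_smul]; rfl
      _ ≤ t * (c * x i₀) := mul_le_mul_of_nonneg_left (h i₀) ht.le
      _ = c * (t * x i₀) := by ring
  exact le_of_mul_le_mul_right key (mul_pos ht (hx i₀))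

theorem norm_lt_of_mulVec_lt [DecidableEq ι] [Nonempty ι] (hB : ∀ i j, 0 ≤ B i j)
    {x : ι → ℝ} (hx : ∀ i, 0 < x i) {c : ℝ} (h : ∀ i, (B *ᵥ x) i < c * x i) {μ : ℂ}
    (hμ : μ ∈ spectrum ℂ (B.map Complex.ofReal)) : ‖μ‖ < c := by
  obtain ⟨c', hc', hle⟩ := exists_lt_le_smul hx h
  exact (norm_le_of_mulVec_le_smul hB hx hle hμ).trans_lt hc'

theorem pow_le_norm_pow_of_smul_le_mulVec [DecidableEq ι] [Nonempty ι] (hB : ∀ i j, 0 ≤ B i j)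
    {x : ι → ℝ} (hx : ∀ i, 0 < x i) {d : ℝ} (hd : 0 ≤ d) (h : d • x ≤ B *ᵥ x) (k : ℕ) :
    d ^ k ≤ ‖B.map Complex.ofReal ^ k‖ := by
  obtain ⟨i₀, -, hi₀⟩ := Finset.univ.exists_max_image x Finset.univ_nonempty
  set xc : ι → ℂ := fun i => (x i : ℂ)
  have hxc : ‖xc‖ ≤ x i₀ := (pi_norm_le_iff_of_nonneg (hx i₀).le).2 fun i => by
    simpa [xc, abs_of_pos (hx i)] using hi₀ i (Finset.mem_univ i)
  have hlow : d ^ k * x i₀ ≤ ((B ^ k) *ᵥ x) i₀ := pow_smul_le_pow_mulVec hB hd h k i₀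
  have key : d ^ k * x i₀ ≤ ‖B.map Complex.ofReal ^ k‖ * x i₀ :=
    calc d ^ k * x i₀ ≤ ((B ^ k) *ᵥ x) i₀ := hlow
      _ = ‖(((B ^ k) *ᵥ x) i₀ : ℂ)‖ := by
          rw [Complex.norm_real, Real.norm_of_nonneg
            ((mul_nonneg (pow_nonneg hd k) (hx i₀).le).trans hlow)]
      _ = ‖(B.map Complex.ofReal ^ k *ᵥ xc) i₀‖ := by
          rw [map_ofReal_pow]; exact congrArg norm (RingHom.map_mulVec Complex.ofRealHom _ _ _)
      _ ≤ ‖B.map Complex.ofReal ^ k *ᵥ xc‖ := norm_le_pi_norm _ i₀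
      _ ≤ ‖B.map Complex.ofReal ^ k‖ * ‖xc‖ := linfty_opNorm_mulVec _ _
      _ ≤ ‖B.map Complex.ofReal ^ k‖ * x i₀ := by gcongr
  exact le_of_mul_le_mul_right key (hx i₀)

theorem ofReal_le_spectralRadius_of_smul_le_mulVec [DecidableEq ι] [Nonempty ι]
    (hB : ∀ i j, 0 ≤ B i j) {x : ι → ℝ} (hx : ∀ i, 0 < x i) {d : ℝ} (h : d • x ≤ B *ᵥ x) :
    ENNReal.ofReal d ≤ spectralRadius ℂ (B.map Complex.ofReal) := by
  rcases le_or_gt d 0 with hd | hd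
  · simp [ENNReal.ofReal_of_nonpos hd]
  refine ge_of_tendsto (spectrum.pow_nnnorm_pow_one_div_tendsto_nhds_spectralRadius _) ?_
  filter_upwards [eventually_ge_atTop 1] with k hk
  rw [one_div, ENNReal.le_rpow_inv_iff (by positivity), ENNReal.rpow_natCast,
    ← ENNReal.ofReal_pow hd.le, ← enorm_eq_nnnorm, ← ofReal_norm]
  exact ENNReal.ofReal_le_ofReal (pow_le_norm_pow_of_smul_le_mulVec hB hx hd.le h k)

theorem exists_norm_gt_of_lt_mulVec [DecidableEq ι] [Nonempty ι] (hB : ∀ i j, 0 ≤ B i j)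
    {x : ι → ℝ} (hx : ∀ i, 0 < x i) {d : ℝ} (h : ∀ i, d * x i < (B *ᵥ x) i) :
    ∃ μ ∈ spectrum ℂ (B.map Complex.ofReal), d < ‖μ‖ := by
  obtain ⟨d', hd', hle⟩ := exists_gt_smul_le hx h
  obtain ⟨μ, hμ, hμρ⟩ := spectrum.exists_nnnorm_eq_spectralRadius (B.map Complex.ofReal)
  have := (ofReal_le_spectralRadius_of_smul_le_mulVec hB hx hle).trans hμρ.ge
  rw [← enorm_eq_nnnorm, ← ofReal_norm, ENNReal.ofReal_le_ofReal_iff (norm_nonneg _)] at this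
  exact ⟨μ, hμ, hd'.trans_le this⟩

theorem mulVec_pos_of_pos {S : Matrix ι ι ℝ}
    (hS : ∀ i j, 0 < S i j) {y : ι → ℝ} (hy : 0 ≤ y) (hy0 : y ≠ 0) (i : ι) :
    0 < (S *ᵥ y) i := by
  obtain ⟨j, hj⟩ := Function.ne_iff.1 hy0
  exact Finset.sum_pos' (fun k _ => mul_nonneg (hS i k).le (hy k))
    ⟨j, Finset.mem_univ j, mul_pos (hS i j) ((hy j).lt_of_ne (Ne.symm hj))⟩

end Matrix

section SpectralRadius

variable {n : ℕ} (A : Matrix (Fin n) (Fin n) ℝ)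

theorem specRad_eq_sSup_image :
    specRad A = sSup (norm '' spectrum ℂ (A.map Complex.ofReal)) := by
  simp only [specRad, Set.image, eq_comm]

theorem norm_le_specRad {μ : ℂ} (hμ : μ ∈ spectrum ℂ (A.map Complex.ofReal)) :
    ‖μ‖ ≤ specRad A := by
  rw [specRad_eq_sSup_image]
  exact le_csSup ((Matrix.finite_spectrum _).image norm).bddAbove (Set.mem_image_of_mem _ hμ)

theorem exists_norm_eq_specRad [NeZero n] :
    ∃ μ ∈ spectrum ℂ (A.map Complex.ofReal), ‖μ‖ = specRad A := by
  rw [specRad_eq_sSup_image]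
  exact ((spectrum.nonempty _).image norm).csSup_mem ((Matrix.finite_spectrum _).image norm)

variable {A}

theorem specRad_eq_of_mulVec_eq_smul [NeZero n] (hA : ∀ i j, 0 ≤ A i j) {x : Fin n → ℝ}
    (hx : ∀ i, 0 < x i) {c : ℝ} (h : A *ᵥ x = c • x) : specRad A = c := by
  have hc : 0 ≤ c := by
    have hAx : 0 ≤ (A *ᵥ x) 0 := by
      simpa using Matrix.mulVec_mono_of_nonneg hA (show 0 ≤ x from fun i => (hx i).le) 0
    rw [h] at hAx
    exact nonneg_of_mul_nonneg_left hAx (hx 0)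
  have hmem : (c : ℂ) ∈ spectrum ℂ (A.map Complex.ofReal) := by
    refine (Matrix.mem_spectrum_iff_exists_mulVec_eq_smul _ _).2
      ⟨fun i => x i, fun h0 => (hx 0).ne' (by simpa using congrFun h0 0), funext fun i => ?_⟩
    exact (RingHom.map_mulVec Complex.ofRealHom A x i).symm.trans (by simp [h])
  obtain ⟨μ, hμ, hμρ⟩ := exists_norm_eq_specRad A
  refine le_antisymm ?_ ?_
  · exact hμρ ▸ Matrix.norm_le_of_mulVec_le_smul hA hx h.le hμ
  · simpa [abs_of_nonneg hc] using norm_le_specRad A hmem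

end SpectralRadius

namespace MatIrreducible

variable {n : ℕ} {A : Matrix (Fin n) (Fin n) ℝ}

theorem exists_commute_pos (hA : ∀ i j, 0 ≤ A i j) (hirr : MatIrreducible A) :
    ∃ S : Matrix (Fin n) (Fin n) ℝ, Commute A S ∧ ∀ i j, 0 < S i j := by
  choose p hp using fun i j => (hirr i j).imp fun _ => And.right
  let K := Finset.univ.sup (fun ij : Fin n × Fin n => p ij.1 ij.2) + 1
  refine ⟨∑ k ∈ Finset.range K, A ^ k,
    Commute.sum_right _ _ _ fun k _ => Commute.self_pow A k, fun i j => ?_⟩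
  have hpK : p i j ∈ Finset.range K := Finset.mem_range.2 <| Nat.lt_succ_of_le <|
    Finset.le_sup (f := fun ij : Fin n × Fin n => p ij.1 ij.2) (Finset.mem_univ (i, j))
  rw [Matrix.sum_apply]
  exact (hp i j).trans_le
    (Finset.single_le_sum (fun k _ => Matrix.pow_apply_nonneg hA k i j) hpK)

variable [NeZero n] {x : Fin n → ℝ} {c : ℝ}

theorem mulVec_eq_smul_of_smul_le_mulVec (hA : ∀ i j, 0 ≤ A i j) (hirr : MatIrreducible A)
    (hx : ∀ i, 0 < x i) (h : c • x ≤ A *ᵥ x) (hρ : specRad A ≤ c) : A *ᵥ x = c • x := by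
  by_contra hne
  obtain ⟨S, hAS, hS⟩ := hirr.exists_commute_pos hA
  have hz : ∀ i, 0 < (S *ᵥ x) i := Matrix.mulVec_pos_of_pos hS (fun i => (hx i).le)
    fun h0 => (hx 0).ne' (congrFun h0 0)
  have hgap : ∀ i, c * (S *ᵥ x) i < (A *ᵥ (S *ᵥ x)) i := fun i => by
    have := Matrix.mulVec_pos_of_pos hS (sub_nonneg.2 h) (sub_ne_zero.2 hne) i
    rwa [Matrix.mulVec_sub, Matrix.mulVec_mulVec, ← hAS.eq, ← Matrix.mulVec_mulVec,
      Matrix.mulVec_smul, Pi.sub_apply, sub_pos] at this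
  obtain ⟨μ, hμ, hcμ⟩ := Matrix.exists_norm_gt_of_lt_mulVec hA hz hgap
  exact (hcμ.trans_le (norm_le_specRad A hμ)).not_ge hρ

theorem mulVec_eq_smul_of_mulVec_le_smul (hA : ∀ i j, 0 ≤ A i j) (hirr : MatIrreducible A)
    (hx : ∀ i, 0 < x i) (h : A *ᵥ x ≤ c • x) (hρ : c ≤ specRad A) : A *ᵥ x = c • x := by
  by_contra hne
  obtain ⟨S, hAS, hS⟩ := hirr.exists_commute_pos hA
  have hz : ∀ i, 0 < (S *ᵥ x) i := Matrix.mulVec_pos_of_pos hS (fun i => (hx i).le)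
    fun h0 => (hx 0).ne' (congrFun h0 0)
  have hgap : ∀ i, (A *ᵥ (S *ᵥ x)) i < c * (S *ᵥ x) i := fun i => by
    have := Matrix.mulVec_pos_of_pos hS (sub_nonneg.2 h) (sub_ne_zero.2 (Ne.symm hne)) i
    rwa [Matrix.mulVec_sub, Matrix.mulVec_mulVec, ← hAS.eq, ← Matrix.mulVec_mulVec,
      Matrix.mulVec_smul, Pi.sub_apply, sub_pos] at this
  obtain ⟨μ, hμ, hμρ⟩ := exists_norm_eq_specRad A
  exact (Matrix.norm_lt_of_mulVec_lt hA hz hgap hμ).not_ge (hμρ ▸ hρ)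

end MatIrreducible

section AverageRowSum

variable {n : ℕ} {A : Matrix (Fin n) (Fin n) ℝ}

theorem mulVec_rowSum_apply {i : Fin n} (hr : rowSum A i ≠ 0) :
    (A *ᵥ rowSum A) i = avg2 A i * rowSum A i :=
  (div_mul_cancel₀ _ hr).symm

variable (hr : ∀ i, 0 < rowSum A i) {c : ℝ}
include hr

theorem smul_rowSum_le_mulVec_iff : c • rowSum A ≤ A *ᵥ rowSum A ↔ ∀ i, c ≤ avg2 A i := by
  simp only [Pi.le_def, Pi.smul_apply, smul_eq_mul, mulVec_rowSum_apply (hr _).ne',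
    mul_le_mul_iff_of_pos_right (hr _)]

theorem mulVec_rowSum_le_smul_iff : A *ᵥ rowSum A ≤ c • rowSum A ↔ ∀ i, avg2 A i ≤ c := by
  simp only [Pi.le_def, Pi.smul_apply, smul_eq_mul, mulVec_rowSum_apply (hr _).ne',
    mul_le_mul_iff_of_pos_right (hr _)]

theorem mulVec_rowSum_eq_smul_iff : A *ᵥ rowSum A = c • rowSum A ↔ ∀ i, avg2 A i = c := by
  simp only [funext_iff, Pi.smul_apply, smul_eq_mul, mulVec_rowSum_apply (hr _).ne',
    mul_left_inj' (hr _).ne']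

end AverageRowSum

theorem stmt1 {n : ℕ} [NeZero n] (A : Matrix (Fin n) (Fin n) ℝ)
    (hA : ∀ i j, 0 ≤ A i j) (hirr : MatIrreducible A) (hr : ∀ i, 0 < rowSum A i) :
    ((specRad A = Finset.univ.inf' Finset.univ_nonempty (avg2 A) ∨
        specRad A = Finset.univ.sup' Finset.univ_nonempty (avg2 A)) →
      ∀ i j, avg2 A i = avg2 A j) ∧
    ((∀ i j, avg2 A i = avg2 A j) → ∀ i, specRad A = avg2 A i) := by
  refine ⟨fun hρ => ?_, fun hconst i => ?_⟩
  · obtain ⟨c, hc⟩ : ∃ c, A *ᵥ rowSum A = c • rowSum A := by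
      rcases hρ with hρ | hρ
      · exact ⟨_, hirr.mulVec_eq_smul_of_smul_le_mulVec hA hr
          ((smul_rowSum_le_mulVec_iff hr).2 fun i => Finset.inf'_le _ (Finset.mem_univ i)) hρ.le⟩
      · exact ⟨_, hirr.mulVec_eq_smul_of_mulVec_le_smul hA hr
          ((mulVec_rowSum_le_smul_iff hr).2 fun i => Finset.le_sup' _ (Finset.mem_univ i)) hρ.ge⟩
    have hconst := (mulVec_rowSum_eq_smul_iff hr).1 hc
    exact fun i j => (hconst i).trans (hconst j).symm
  · exact specRad_eq_of_mulVec_eq_smul hA hr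
      ((mulVec_rowSum_eq_smul_iff hr).2 fun j => hconst j i)
end

section
/- Let A = (a_{ij}) be an n×n nonnegative matrix with positive row sums, whose average 2-row sums m_1 ≥ ... ≥ m_n are sorted in decreasing order. Let M be the largest diagonal entry, N the largest off-diagonal entry (assume N > 0), and b = max_{i,j} r_j(A)/r_i(A). Then for each 1 ≤ l ≤ n, ρ(A) ≤ φ_l := (m_l + M − Nb + √((m_l − M + Nb)² + 4Nb Σ_{i=1}^{l−1}(m_i − m_l)))/2. -/
open Matrix BigOperators Finset

/-!
The bound is a Collatz–Wielandt estimate: if `y > 0` and `A y ≤ φ y` entrywise, then comparing an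
eigenvector `v` with `y` at an index maximising `|v_i| / y_i` shows that every eigenvalue has
modulus at most `φ`. The test vector is `y_k = r_k (g + τ_k)` with `τ_k = (m_k - m_l)⁺` and
`g = φ - M + N b`. In `(A y)_t` the diagonal entry contributes at most `M r_t τ_t` and every
off-diagonal one at most `N b r_t τ_j`, so `(A y)_t ≤ φ y_t` comes down to `g (φ - m_l) = N b Σ τ`,
which says that `φ = φ_l` is the larger root of a quadratic. When `g = 0` all `τ_k` vanish and
`y = r` works instead, giving `ρ(A) ≤ max_k m_k ≤ m_l ≤ φ`.
-/

namespace Matrix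

variable {ι : Type*} [Fintype ι] [DecidableEq ι]

theorem exists_mulVec_eq_smul_of_mem_spectrum {B : Matrix ι ι ℂ} {μ : ℂ}
    (hμ : μ ∈ spectrum ℂ B) : ∃ v ≠ 0, B *ᵥ v = μ • v := by
  rw [← spectrum_toLin', ← Module.End.hasEigenvalue_iff_mem_spectrum] at hμ
  obtain ⟨v, hv⟩ := hμ.exists_hasEigenvector
  exact ⟨v, hv.2, by simpa using hv.apply_eq_smul⟩

theorem norm_le_of_mem_spectrum_of_mulVec_le {A : Matrix ι ι ℝ} (hA : ∀ i j, 0 ≤ A i j)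
    {y : ι → ℝ} (hy : ∀ i, 0 < y i) {c : ℝ} (hAy : ∀ i, (A *ᵥ y) i ≤ c * y i) {μ : ℂ}
    (hμ : μ ∈ spectrum ℂ (A.map Complex.ofReal)) : ‖μ‖ ≤ c := by
  obtain ⟨v, hv, hAv⟩ := exists_mulVec_eq_smul_of_mem_spectrum hμ
  obtain ⟨k, hk⟩ := Function.ne_iff.mp hv
  set u : ℝ := sup' univ ⟨k, mem_univ k⟩ fun i => ‖v i‖ / y i with hu_def
  have hvu : ∀ i, ‖v i‖ ≤ y i * u := fun i =>
    (div_le_iff₀' (hy i)).mp (le_sup' (fun i => ‖v i‖ / y i) (mem_univ i))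
  obtain ⟨t, -, ht⟩ := exists_mem_eq_sup' ⟨k, mem_univ k⟩ fun i => ‖v i‖ / y i
  have hvt : ‖v t‖ = y t * u := by rw [hu_def, ht, mul_div_cancel₀ _ (hy t).ne']
  have hu : 0 < u := pos_of_mul_pos_right ((norm_pos_iff.mpr hk).trans_le (hvu k)) (hy k).le
  have hAv_t : ‖μ‖ * ‖v t‖ ≤ c * ‖v t‖ :=
    calc ‖μ‖ * ‖v t‖ = ‖∑ j, (A t j : ℂ) * v j‖ := by
          rw [← norm_mul, ← smul_eq_mul, ← Pi.smul_apply, ← hAv]; rfl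
      _ ≤ ∑ j, A t j * ‖v j‖ := by
          refine (norm_sum_le _ _).trans_eq (sum_congr rfl fun j _ => ?_)
          rw [norm_mul, Complex.norm_real, Real.norm_of_nonneg (hA t j)]
      _ ≤ ∑ j, A t j * (y j * u) := by gcongr with j; exacts [hA t j, hvu j]
      _ = (A *ᵥ y) t * u := by simp only [mulVec, dotProduct, sum_mul, mul_assoc]
      _ ≤ c * ‖v t‖ := by rw [hvt, ← mul_assoc]; gcongr; exact hAy t
  exact le_of_mul_le_mul_right hAv_t (hvt ▸ mul_pos (hy t) hu)

end Matrix

theorem Antitone.sum_max_sub_zero_eq {ι : Type*} [Fintype ι] [LinearOrder ι] {m : ι → ℝ}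
    (hm : Antitone m) (l : ι) :
    ∑ i, max (m i - m l) 0 = ∑ i ∈ univ.filter (· < l), (m i - m l) := by
  rw [sum_filter]
  refine sum_congr rfl fun i _ => ?_
  split_ifs with hil
  · exact max_eq_left (sub_nonneg.mpr (hm hil.le))
  · exact max_eq_right (sub_nonpos.mpr (hm (not_lt.mp hil)))

section SpectralBounds

variable {n : ℕ} {A : Matrix (Fin n) (Fin n) ℝ}

theorem specRad_le_of_mulVec_le [NeZero n] (hA : ∀ i j, 0 ≤ A i j) {y : Fin n → ℝ}
    (hy : ∀ i, 0 < y i) {c : ℝ} (hAy : ∀ i, (A *ᵥ y) i ≤ c * y i) : specRad A ≤ c := by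
  refine Real.sSup_le ?_ ?_
  · rintro _ ⟨μ, hμ, rfl⟩
    exact norm_le_of_mem_spectrum_of_mulVec_le hA hy hAy hμ
  · have h0 : 0 ≤ (A *ᵥ y) 0 := dotProduct_nonneg_of_nonneg (hA 0) fun j => (hy j).le
    exact nonneg_of_mul_nonneg_left (h0.trans (hAy 0)) (hy 0)

theorem mulVec_rowSum (hr : ∀ i, 0 < rowSum A i) (i : Fin n) :
    (A *ᵥ rowSum A) i = avg2 A i * rowSum A i :=
  (div_mul_cancel₀ _ (hr i).ne').symm

theorem specRad_le_of_avg2_le [NeZero n] (hA : ∀ i j, 0 ≤ A i j) (hr : ∀ i, 0 < rowSum A i)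
    {c : ℝ} (hc : ∀ i, avg2 A i ≤ c) : specRad A ≤ c :=
  specRad_le_of_mulVec_le hA hr fun i =>
    (mulVec_rowSum hr i).trans_le (mul_le_mul_of_nonneg_right (hc i) (hr i).le)

theorem sum_mul_rowSum_mul_le (hA : ∀ i j, 0 ≤ A i j) (hr : ∀ i, 0 < rowSum A i)
    {M N b : ℝ} (hM : ∀ i, A i i ≤ M) (hN : ∀ i j, i ≠ j → A i j ≤ N)
    (hb : ∀ i j, rowSum A j ≤ b * rowSum A i) {τ : Fin n → ℝ} (hτ : ∀ i, 0 ≤ τ i) (t : Fin n) :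
    ∑ j, A t j * (rowSum A j * τ j) ≤
      rowSum A t * ((M - N * b) * τ t + N * b * ∑ j, τ j) := by
  have hterm : ∀ j, A t j * (rowSum A j * τ j) ≤
      rowSum A t * (N * b * τ j + if t = j then (M - N * b) * τ j else 0) := by
    intro j
    split_ifs with htj
    · subst htj
      nlinarith [mul_le_mul_of_nonneg_right (hM t) (mul_nonneg (hr t).le (hτ t))]
    · have hAr : A t j * rowSum A j ≤ N * (b * rowSum A t) :=
        mul_le_mul (hN t j htj) (hb t j) (hr j).le ((hA t j).trans (hN t j htj))
      nlinarith [mul_le_mul_of_nonneg_right hAr (hτ j)]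
  calc ∑ j, A t j * (rowSum A j * τ j)
      ≤ ∑ j, rowSum A t * (N * b * τ j + if t = j then (M - N * b) * τ j else 0) :=
        sum_le_sum fun j _ => hterm j
    _ = rowSum A t * ((M - N * b) * τ t + N * b * ∑ j, τ j) := by
        rw [← mul_sum, sum_add_distrib, sum_ite_eq, if_pos (mem_univ t), ← mul_sum]; ring

theorem specRad_le_of_sum_excess_eq_zero [NeZero n] (hA : ∀ i j, 0 ≤ A i j)
    (hr : ∀ i, 0 < rowSum A i) {θ : ℝ} (hS : ∑ i, max (avg2 A i - θ) 0 = 0) : specRad A ≤ θ := by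
  refine specRad_le_of_avg2_le hA hr fun i => ?_
  have hi := (sum_eq_zero_iff_of_nonneg fun i _ => le_max_right (avg2 A i - θ) 0).mp hS i
    (mem_univ i)
  linarith [le_max_left (avg2 A i - θ) 0]

theorem specRad_le_of_sum_excess_le [NeZero n] (hA : ∀ i j, 0 ≤ A i j)
    (hr : ∀ i, 0 < rowSum A i) {M N b : ℝ} (hM : ∀ i, A i i ≤ M) (hN : ∀ i j, i ≠ j → A i j ≤ N)
    (hb : ∀ i j, rowSum A j ≤ b * rowSum A i) {g θ : ℝ} (hg : 0 < g)
    (hS : N * b * ∑ i, max (avg2 A i - θ) 0 ≤ g * (g + M - N * b - θ)) :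
    specRad A ≤ g + M - N * b := by
  set τ : Fin n → ℝ := fun i => max (avg2 A i - θ) 0
  have hτ : ∀ i, 0 ≤ τ i := fun i => le_max_right _ _
  refine specRad_le_of_mulVec_le hA (y := fun i => rowSum A i * (g + τ i))
    (fun i => mul_pos (hr i) (add_pos_of_pos_of_nonneg hg (hτ i))) fun t => ?_
  have hsplit : (A *ᵥ fun i => rowSum A i * (g + τ i)) t =
      g * (A *ᵥ rowSum A) t + ∑ j, A t j * (rowSum A j * τ j) := by
    simp only [mulVec, dotProduct, mul_sum, ← sum_add_distrib]
    exact sum_congr rfl fun j _ => by ring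
  have hτt : avg2 A t - θ ≤ τ t := le_max_left _ _
  rw [hsplit, mulVec_rowSum hr]
  nlinarith [sum_mul_rowSum_mul_le hA hr hM hN hb hτ t, mul_le_mul_of_nonneg_left hS (hr t).le,
    mul_le_mul_of_nonneg_left hτt (mul_nonneg hg.le (hr t).le)]

end SpectralBounds

theorem larger_root_spec {x k z : ℝ} (hk : 0 ≤ k) (hz : z = (x + √(x ^ 2 + 4 * k)) / 2) :
    0 ≤ z ∧ x ≤ z ∧ z * (z - x) = k := by
  have hsq : √(x ^ 2 + 4 * k) ^ 2 = x ^ 2 + 4 * k := Real.sq_sqrt (by positivity)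
  have habs : |x| ≤ √(x ^ 2 + 4 * k) := Real.abs_le_sqrt (by linarith)
  refine ⟨?_, ?_, ?_⟩
  · linarith [neg_abs_le x]
  · linarith [le_abs_self x]
  · rw [hz]; linear_combination hsq / 4

theorem stmt3_general {n : ℕ} (A : Matrix (Fin n) (Fin n) ℝ)
    (hA : ∀ i j, 0 ≤ A i j) (hr : ∀ i, 0 < rowSum A i)
    (m : Fin n → ℝ) (σ : Equiv.Perm (Fin n)) (hm : ∀ i, m i = avg2 A (σ i))
    (hmono : Antitone m) (M N b : ℝ)
    (hM : ∀ i, A i i ≤ M)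
    (hN : ∀ i j, i ≠ j → A i j ≤ N) (hNpos : 0 < N)
    (hb : ∀ i j, rowSum A j / rowSum A i ≤ b)
    (l : Fin n) :
    specRad A ≤ (m l + M - N * b +
      Real.sqrt ((m l - M + N * b) ^ 2 +
        4 * N * b * ∑ i ∈ Finset.univ.filter (fun i => i < l), (m i - m l))) / 2 := by
  have : NeZero n := NeZero.of_pos l.pos
  have hrb : ∀ i j, rowSum A j ≤ b * rowSum A i := fun i j => (div_le_iff₀ (hr i)).mp (hb i j)
  have hNb : 0 < N * b :=
    mul_pos hNpos (zero_lt_one.trans_le (by simpa [div_self (hr l).ne'] using hb l l))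
  have hexcess : ∑ i, max (avg2 A i - m l) 0 = ∑ i ∈ univ.filter (· < l), (m i - m l) := by
    rw [← hmono.sum_max_sub_zero_eq l, ← Equiv.sum_comp σ]
    simp only [hm]
  set S := ∑ i ∈ univ.filter (· < l), (m i - m l)
  have hS : 0 ≤ S := hexcess ▸ sum_nonneg fun i _ => le_max_right _ _
  set g := (m l - M + N * b + √((m l - M + N * b) ^ 2 + 4 * (N * b * S))) / 2 with hg_def
  obtain ⟨hg, hlg, hroot⟩ := larger_root_spec (mul_nonneg hNb.le hS) hg_def
  rw [show (m l + M - N * b + √((m l - M + N * b) ^ 2 + 4 * N * b * S)) / 2 = g + M - N * b by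
    rw [hg_def]; ring_nf]
  rcases hg.eq_or_lt with hg0 | hgpos
  · have hS0 : S = 0 := by
      rw [← hg0, zero_mul] at hroot
      exact (mul_eq_zero.mp hroot.symm).resolve_left hNb.ne'
    exact (specRad_le_of_sum_excess_eq_zero hA hr (hexcess.trans hS0)).trans (by linarith)
  · exact specRad_le_of_sum_excess_le hA hr hM hN hrb hgpos (by rw [hexcess, ← hroot]; linarith)

theorem stmt3 {n : ℕ} (A : Matrix (Fin n) (Fin n) ℝ)
    (hA : ∀ i j, 0 ≤ A i j) (hr : ∀ i, 0 < rowSum A i)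
    (m : Fin n → ℝ) (σ : Equiv.Perm (Fin n)) (hm : ∀ i, m i = avg2 A (σ i))
    (hmono : Antitone m) (M N b : ℝ)
    (hM : ∀ i, A i i ≤ M) (hM' : ∃ i, A i i = M)
    (hN : ∀ i j, i ≠ j → A i j ≤ N) (hN' : ∃ i j, i ≠ j ∧ A i j = N) (hNpos : 0 < N)
    (hb : ∀ i j, rowSum A j / rowSum A i ≤ b)
    (hb' : ∃ i j, rowSum A j / rowSum A i = b)
    (l : Fin n) :
    specRad A ≤ (m l + M - N * b +
      Real.sqrt ((m l - M + N * b) ^ 2 +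
        4 * N * b * ∑ i ∈ Finset.univ.filter (fun i => i < l), (m i - m l))) / 2 :=
  stmt3_general A hA hr m σ hm hmono M N b hM hN hNpos hb l
end

section
/- With notation as in the upper-bound theorem (m_1 ≥ ... ≥ m_n, M the largest diagonal entry, N > 0 the largest off-diagonal entry, b the maximum ratio of row sums, and φ_l = (m_l + M − Nb + √((m_l − M + Nb)² + 4Nb Σ_{i=1}^{l−1}(m_i − m_l)))/2): if Σ_{i=1}^l m_i ≥ l(Nbl + M − Nb) then φ_l ≥ φ_{l+1}, and if Σ_{i=1}^l m_i < l(Nbl + M − Nb) then φ_l ≤ φ_{l+1}. -/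
/-! With `K = M - N b` and `S = m_1 + ⋯ + m_l`, both `φ_l` and `φ_{l+1}` are larger roots of
monic quadratics, `f_l(x) = (x - m_l)(x - K) - N b (S - l m_l)` and the analogous `f_{l+1}`.
Their difference `f_l(x) - f_{l+1}(x) = (m_l - m_{l+1})(T - x)`, with `T = N b l + K`, vanishes at
`T` and has the sign of `T - x`, while `f_l(T) = N b (l T - S)`. If `S ≥ l T`, both roots lie
to the right of `T`, where `f_l ≤ f_{l+1}`, so `f_l(φ_{l+1}) ≤ 0` and `φ_{l+1} ≤ φ_l`. If
`S < l T`, both lie to the left, where `f_{l+1} ≤ f_l`, and symmetrically `φ_l ≤ φ_{l+1}`. -/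

open Finset

/-- `phi M N b (m l) (∑ i < l, (m i - m l))` is the paper's `φ_l`: the larger root of
`(x - a) (x - (M - N b)) = N b s`. -/
noncomputable def phi (M N b a s : ℝ) : ℝ :=
  (a + M - N * b + Real.sqrt ((a - M + N * b) ^ 2 + 4 * N * b * s)) / 2

section phi

variable {M N b a s x : ℝ}

theorem le_phi_of_mul_le (h : (x - a) * (x - (M - N * b)) ≤ N * b * s) : x ≤ phi M N b a s := by
  unfold phi
  rcases le_or_gt (2 * x) (a + M - N * b) with hx | hx
  · linarith [Real.sqrt_nonneg ((a - M + N * b) ^ 2 + 4 * N * b * s)]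
  · have hsq : (2 * x - (a + M - N * b)) ^ 2 ≤ (a - M + N * b) ^ 2 + 4 * N * b * s := by
      nlinarith
    linarith [Real.le_sqrt_of_sq_le hsq]

theorem phi_le_of_le_mul (h : N * b * s ≤ (x - a) * (x - (M - N * b)))
    (hx : a + M - N * b ≤ 2 * x) : phi M N b a s ≤ x := by
  unfold phi
  have hsq : (a - M + N * b) ^ 2 + 4 * N * b * s ≤ (2 * x - (a + M - N * b)) ^ 2 := by nlinarith
  have := Real.sqrt_le_sqrt hsq
  rw [Real.sqrt_sq (by linarith)] at this
  linarith

theorem phi_sub_mul_phi_sub (h : 0 ≤ (a - M + N * b) ^ 2 + 4 * N * b * s) :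
    (phi M N b a s - a) * (phi M N b a s - (M - N * b)) = N * b * s := by
  unfold phi
  linear_combination Real.sq_sqrt h / 4

end phi

section comparison

variable {M N b a a' S l : ℝ}

theorem phi_le_phi_of_threshold_le (hNb : 0 ≤ N * b) (ha : a' ≤ a) (hl : 0 ≤ l)
    (hS : l * a ≤ S) (hT : l * (N * b * l + M - N * b) ≤ S) :
    phi M N b a' (S - l * a') ≤ phi M N b a (S - l * a) := by
  have hT_le : N * b * l + M - N * b ≤ phi M N b a' (S - l * a') :=
    le_phi_of_mul_le (by nlinarith [mul_le_mul_of_nonneg_left hT hNb])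
  have hroot := phi_sub_mul_phi_sub (M := M) (N := N) (b := b) (a := a') (s := S - l * a')
    (by nlinarith [sq_nonneg (a' - M + N * b), mul_le_mul_of_nonneg_left ha hl])
  exact le_phi_of_mul_le (by nlinarith [mul_nonneg (sub_nonneg.2 ha) (sub_nonneg.2 hT_le)])

theorem phi_le_phi_of_lt_threshold (hNb : 0 ≤ N * b) (ha : a' ≤ a) (hl : 0 ≤ l)
    (hS : l * a ≤ S) (hT : S < l * (N * b * l + M - N * b)) :
    phi M N b a (S - l * a) ≤ phi M N b a' (S - l * a') := by
  have ha_lt : a < N * b * l + M - N * b := by nlinarith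
  have hle_T : phi M N b a (S - l * a) ≤ N * b * l + M - N * b :=
    phi_le_of_le_mul (by nlinarith [mul_le_mul_of_nonneg_left hT.le hNb])
      (by nlinarith [mul_nonneg hNb hl])
  have hroot := phi_sub_mul_phi_sub (M := M) (N := N) (b := b) (a := a) (s := S - l * a)
    (by nlinarith [sq_nonneg (a - M + N * b)])
  exact le_phi_of_mul_le (by nlinarith [mul_nonneg (sub_nonneg.2 ha) (sub_nonneg.2 hle_T)])

end comparison

theorem sum_Icc_one_sub_const (f : ℕ → ℝ) (c : ℝ) (l : ℕ) :
    ∑ i ∈ Icc 1 l, (f i - c) = ∑ i ∈ Icc 1 l, f i - l * c := by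
  simp [sum_sub_distrib]

theorem stmt5 (n l : ℕ) (hl1 : 1 ≤ l) (hln : l + 1 ≤ n) (m : ℕ → ℝ)
    (hmono : ∀ i j, 1 ≤ i → i ≤ j → j ≤ n → m j ≤ m i)
    (M N b : ℝ) (hN : 0 < N) (hb : 0 < b) :
    ((l : ℝ) * (N * b * l + M - N * b) ≤ ∑ i ∈ Finset.Icc 1 l, m i →
      (m (l + 1) + M - N * b +
        Real.sqrt ((m (l + 1) - M + N * b) ^ 2 +
          4 * N * b * ∑ i ∈ Finset.Icc 1 l, (m i - m (l + 1)))) / 2 ≤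
      (m l + M - N * b +
        Real.sqrt ((m l - M + N * b) ^ 2 +
          4 * N * b * ∑ i ∈ Finset.Icc 1 (l - 1), (m i - m l))) / 2) ∧
    (∑ i ∈ Finset.Icc 1 l, m i < (l : ℝ) * (N * b * l + M - N * b) →
      (m l + M - N * b +
        Real.sqrt ((m l - M + N * b) ^ 2 +
          4 * N * b * ∑ i ∈ Finset.Icc 1 (l - 1), (m i - m l))) / 2 ≤
      (m (l + 1) + M - N * b +
        Real.sqrt ((m (l + 1) - M + N * b) ^ 2 +
          4 * N * b * ∑ i ∈ Finset.Icc 1 l, (m i - m (l + 1)))) / 2) := by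
  have hNb : 0 ≤ N * b := by positivity
  have hstep : m (l + 1) ≤ m l := hmono l (l + 1) hl1 (by omega) hln
  have hmin : ∀ i ∈ Icc 1 l, m l ≤ m i := fun i hi =>
    hmono i l (mem_Icc.1 hi).1 (mem_Icc.1 hi).2 (by omega)
  have hS : (l : ℝ) * m l ≤ ∑ i ∈ Icc 1 l, m i := by
    simpa using card_nsmul_le_sum _ _ _ hmin
  have hdrop : ∑ i ∈ Icc 1 (l - 1), (m i - m l) = ∑ i ∈ Icc 1 l, (m i - m l) := by
    conv_rhs => rw [← Nat.sub_add_cancel hl1, sum_Icc_succ_top (by omega), Nat.sub_add_cancel hl1]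
    ring
  rw [hdrop, sum_Icc_one_sub_const, sum_Icc_one_sub_const]
  exact ⟨phi_le_phi_of_threshold_le hNb hstep l.cast_nonneg hS,
    phi_le_phi_of_lt_threshold hNb hstep l.cast_nonneg hS⟩
end

section
/- Let A = (a_{ij}) be an n×n nonnegative matrix with positive row sums, M its largest diagonal entry, N its largest off-diagonal entry, and b = max_{i,j} r_j(A)/r_i(A). Then Σ_{i=1}^n m_i(A) ≤ n(Nbn + M − Nb), with equality if and only if A = M·I_n + (N − M)·J_n (i.e., every diagonal entry equals M and every off-diagonal entry equals N and all row-sum ratios equal b). -/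
open Matrix BigOperators Finset

/-!
In `r_i m_i = a_ii r_i + ∑_{k ≠ i} a_ik r_k` the diagonal term is at most `M r_i` and each
off-diagonal term at most `N · b r_i`, so `m_i ≤ M + (n - 1) N b`; summing over `i` gives the
bound. As all row sums are positive, equality in a row forces `a_ii = M` and `a_ik = N`. Then
every row sum is `M + (n - 1) N`, so every ratio `r_j / r_i` is `1`, and `b`, being one of
these ratios, is `1` as well.
-/

section
variable {n : ℕ} {A : Matrix (Fin n) (Fin n) ℝ} {M N b : ℝ}

lemma sum_univ_erase_const (i : Fin n) (c : ℝ) : ∑ _k ∈ univ.erase i, c = (n - 1) * c := by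
  rw [sum_const, card_erase_of_mem (mem_univ i), card_univ, Fintype.card_fin, nsmul_eq_mul,
    Nat.cast_pred i.pos]

lemma rowSum_le_mul_rowSum (hr : ∀ i, 0 < rowSum A i)
    (hb : ∀ i j, rowSum A j / rowSum A i ≤ b) (i j : Fin n) :
    rowSum A j ≤ b * rowSum A i :=
  (div_le_iff₀ (hr i)).mp (hb i j)

lemma mul_rowSum_le_of_ne (hA : ∀ i j, 0 ≤ A i j) (hr : ∀ i, 0 < rowSum A i)
    (hN : ∀ i j, i ≠ j → A i j ≤ N) (hb : ∀ i j, rowSum A j / rowSum A i ≤ b)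
    {i k : Fin n} (hik : i ≠ k) :
    A i k * rowSum A k ≤ N * (b * rowSum A i) :=
  mul_le_mul (hN i k hik) (rowSum_le_mul_rowSum hr hb i k) (hr k).le
    ((hA i k).trans (hN i k hik))

lemma eq_of_mul_rowSum_eq (hA : ∀ i j, 0 ≤ A i j) (hr : ∀ i, 0 < rowSum A i)
    (hN : ∀ i j, i ≠ j → A i j ≤ N) (hb : ∀ i j, rowSum A j / rowSum A i ≤ b)
    {i k : Fin n} (hik : i ≠ k) (h : A i k * rowSum A k = N * (b * rowSum A i)) :
    A i k = N :=
  (hN i k hik).lt_or_eq.resolve_left fun hlt =>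
    (mul_lt_mul hlt (rowSum_le_mul_rowSum hr hb i k) (hr k) ((hA i k).trans (hN i k hik))).ne h

lemma bound_mul_rowSum (i : Fin n) :
    (M + (n - 1) * (N * b)) * rowSum A i
      = M * rowSum A i + ∑ _k ∈ univ.erase i, N * (b * rowSum A i) := by
  rw [sum_univ_erase_const]
  ring

lemma avg2_le (hA : ∀ i j, 0 ≤ A i j) (hr : ∀ i, 0 < rowSum A i) (hM : ∀ i, A i i ≤ M)
    (hN : ∀ i j, i ≠ j → A i j ≤ N) (hb : ∀ i j, rowSum A j / rowSum A i ≤ b) (i : Fin n) :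
    avg2 A i ≤ M + (n - 1) * (N * b) := by
  rw [avg2, div_le_iff₀ (hr i), bound_mul_rowSum, ← add_sum_erase _ _ (mem_univ i)]
  exact add_le_add (mul_le_mul_of_nonneg_right (hM i) (hr i).le)
    (sum_le_sum fun k hk => mul_rowSum_le_of_ne hA hr hN hb (ne_of_mem_erase hk).symm)

lemma eq_of_avg2_eq (hA : ∀ i j, 0 ≤ A i j) (hr : ∀ i, 0 < rowSum A i) (hM : ∀ i, A i i ≤ M)
    (hN : ∀ i j, i ≠ j → A i j ≤ N) (hb : ∀ i j, rowSum A j / rowSum A i ≤ b) {i : Fin n}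
    (h : avg2 A i = M + (n - 1) * (N * b)) :
    A i i = M ∧ ∀ k, i ≠ k → A i k = N := by
  have hoff_le : ∀ k ∈ univ.erase i, A i k * rowSum A k ≤ N * (b * rowSum A i) :=
    fun k hk => mul_rowSum_le_of_ne hA hr hN hb (ne_of_mem_erase hk).symm
  rw [avg2, div_eq_iff (hr i).ne', bound_mul_rowSum, ← add_sum_erase _ _ (mem_univ i),
    add_eq_add_iff_eq_and_eq (mul_le_mul_of_nonneg_right (hM i) (hr i).le)
      (sum_le_sum hoff_le)] at h
  obtain ⟨hdiag, hoff⟩ := h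
  refine ⟨mul_right_cancel₀ (hr i).ne' hdiag, fun k hik => ?_⟩
  exact eq_of_mul_rowSum_eq hA hr hN hb hik
    ((sum_eq_sum_iff_of_le hoff_le).mp hoff k (mem_erase.mpr ⟨hik.symm, mem_univ k⟩))

lemma rowSum_eq_of_diag_of_offDiag (hdiag : ∀ i, A i i = M)
    (hoff : ∀ i j, i ≠ j → A i j = N) (i : Fin n) :
    rowSum A i = M + (n - 1) * N := by
  rw [rowSum, ← add_sum_erase _ _ (mem_univ i), hdiag,
    sum_congr rfl fun k hk => hoff i k (ne_of_mem_erase hk).symm, sum_univ_erase_const]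

lemma rowSum_div_rowSum_eq_one (hr : ∀ i, 0 < rowSum A i) (hdiag : ∀ i, A i i = M)
    (hoff : ∀ i j, i ≠ j → A i j = N) (i j : Fin n) :
    rowSum A j / rowSum A i = 1 := by
  rw [rowSum_eq_of_diag_of_offDiag hdiag hoff j, ← rowSum_eq_of_diag_of_offDiag hdiag hoff i]
  exact div_self (hr i).ne'

lemma avg2_eq_of_rowSum_eq {c : ℝ} (h : ∀ i, rowSum A i = c) (i : Fin n) : avg2 A i = c := by
  simp only [avg2, h, ← sum_mul]
  rw [← rowSum, h, mul_self_div_self]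

end

theorem stmt6_general {n : ℕ} (A : Matrix (Fin n) (Fin n) ℝ)
    (hA : ∀ i j, 0 ≤ A i j) (hr : ∀ i, 0 < rowSum A i) (M N b : ℝ)
    (hM : ∀ i, A i i ≤ M)
    (hN : ∀ i j, i ≠ j → A i j ≤ N)
    (hb : ∀ i j, rowSum A j / rowSum A i ≤ b)
    (hb' : ∃ i j, rowSum A j / rowSum A i = b) :
    (∑ i, avg2 A i) ≤ n * (N * b * n + M - N * b) ∧
    ((∑ i, avg2 A i) = n * (N * b * n + M - N * b) ↔
      (∀ i, A i i = M) ∧ (∀ i j, i ≠ j → A i j = N) ∧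
        (∀ i j, rowSum A j / rowSum A i = b)) := by
  have hle : ∀ i, avg2 A i ≤ M + (n - 1) * (N * b) := avg2_le hA hr hM hN hb
  have hrhs : (n : ℝ) * (N * b * n + M - N * b) = ∑ _i : Fin n, (M + (n - 1) * (N * b)) := by
    rw [sum_const, card_univ, Fintype.card_fin, nsmul_eq_mul]
    ring
  rw [hrhs, sum_eq_sum_iff_of_le fun i _ => hle i]
  refine ⟨sum_le_sum fun i _ => hle i, fun heq => ?_, fun ⟨hdiag, hoff, hratio⟩ i _ => ?_⟩
  · have hdiag i := (eq_of_avg2_eq hA hr hM hN hb (heq i (mem_univ i))).1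
    have hoff i j (hij : i ≠ j) := (eq_of_avg2_eq hA hr hM hN hb (heq i (mem_univ i))).2 j hij
    have hone := rowSum_div_rowSum_eq_one hr hdiag hoff
    obtain ⟨i, j, hb_eq⟩ := hb'
    exact ⟨hdiag, hoff, fun i' j' => by rw [hone, ← hb_eq, hone]⟩
  · have hb_one : b = 1 := by rw [← hratio i i, div_self (hr i).ne']
    rw [avg2_eq_of_rowSum_eq (rowSum_eq_of_diag_of_offDiag hdiag hoff) i, hb_one, mul_one]

theorem stmt6 {n : ℕ} (A : Matrix (Fin n) (Fin n) ℝ)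
    (hA : ∀ i j, 0 ≤ A i j) (hr : ∀ i, 0 < rowSum A i) (M N b : ℝ)
    (hM : ∀ i, A i i ≤ M) (hM' : ∃ i, A i i = M)
    (hN : ∀ i j, i ≠ j → A i j ≤ N) (hN' : ∃ i j, i ≠ j ∧ A i j = N)
    (hb : ∀ i j, rowSum A j / rowSum A i ≤ b)
    (hb' : ∃ i j, rowSum A j / rowSum A i = b) :
    (∑ i, avg2 A i) ≤ n * (N * b * n + M - N * b) ∧
    ((∑ i, avg2 A i) = n * (N * b * n + M - N * b) ↔
      (∀ i, A i i = M) ∧ (∀ i j, i ≠ j → A i j = N) ∧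
        (∀ i j, rowSum A j / rowSum A i = b)) :=
  stmt6_general A hA hr M N b hM hN hb hb'
end

section
/- Let G be a graph on n ≥ 2 vertices without isolated vertices, with average 2-degrees m_1 ≥ ... ≥ m_n, maximum degree d_max, and minimum degree d_min. Then for each 1 ≤ l ≤ n, the spectral radius of the adjacency matrix satisfies ρ(A(G)) ≤ (m_l − d_max/d_min + √((m_l + d_max/d_min)² + 4(d_max/d_min) Σ_{i=1}^{l−1}(m_i − m_l)))/2. -/
open Matrix BigOperators Finset

/-!
Collatz–Wielandt: if a positive vector `w` satisfies `A w ≤ ρ w` entrywise for a nonnegative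
matrix `A`, then every eigenvalue of `A` has modulus at most `ρ`. With `B = d_max / d_min` and
`g_i = (m_i - m_l)⁺`, so that `∑ g_i = S = ∑_{i<l} (m_i - m_l)`, take `w_i = (ρ + B + g_i) d_i`.
Since `∑_{j∼i} d_j ≤ (m_l + g_i) d_i` and `d_j ≤ B d_i`,
`(A w)_i ≤ (ρ + B)(m_l + g_i) d_i + B d_i (S - g_i)`, which equals `ρ w_i` as soon as
`ρ (ρ + B) = m_l (ρ + B) + B S`; the bound of the theorem is the larger root of this quadratic.
-/

theorem Matrix.exists_mulVec_eq_smul_of_mem_spectrum_s8 {ι : Type*} [Fintype ι] [DecidableEq ι]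
    {M : Matrix ι ι ℂ} {μ : ℂ} (hμ : μ ∈ spectrum ℂ M) : ∃ y ≠ 0, M *ᵥ y = μ • y := by
  rw [← Matrix.spectrum_toLin', ← Module.End.hasEigenvalue_iff_mem_spectrum] at hμ
  obtain ⟨y, hy, hy0⟩ := hμ.exists_hasEigenvector
  exact ⟨y, hy0, by simpa using Module.End.mem_eigenspace_iff.1 hy⟩

theorem Matrix.norm_eigenvalue_le_of_mulVec_le {ι : Type*} [Fintype ι] {A : Matrix ι ι ℝ}
    (hA : ∀ i j, 0 ≤ A i j) {v : ι → ℝ} (hv : ∀ i, 0 < v i) {r : ℝ}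
    (hAv : ∀ i, (A *ᵥ v) i ≤ r * v i) {μ : ℂ} {y : ι → ℂ} (hy0 : y ≠ 0)
    (hy : A.map Complex.ofReal *ᵥ y = μ • y) : ‖μ‖ ≤ r := by
  obtain ⟨k, hk⟩ := Function.ne_iff.mp hy0
  obtain ⟨i, -, hmax⟩ := exists_max_image univ (fun j => ‖y j‖ / v j) ⟨k, mem_univ k⟩
  set c := ‖y i‖ / v i
  have hc : 0 < c := (div_pos (norm_pos_iff.2 hk) (hv k)).trans_le (hmax k (mem_univ k))
  have hyc : ∀ j, ‖y j‖ ≤ c * v j := fun j => (div_le_iff₀ (hv j)).1 (hmax j (mem_univ j))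
  have hyi : ‖y i‖ = c * v i := (div_mul_cancel₀ _ (hv i).ne').symm
  refine le_of_mul_le_mul_right ?_ (mul_pos hc (hv i))
  calc ‖μ‖ * (c * v i) = ‖∑ j, (A i j : ℂ) * y j‖ := by
        rw [← hyi, ← norm_mul, ← smul_eq_mul, ← Pi.smul_apply, ← hy]; rfl
    _ ≤ ∑ j, A i j * (c * v j) := by
        refine (norm_sum_le _ _).trans (sum_le_sum fun j _ => ?_)
        rw [norm_mul, Complex.norm_real, Real.norm_of_nonneg (hA i j)]
        exact mul_le_mul_of_nonneg_left (hyc j) (hA i j)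
    _ = c * (A *ᵥ v) i := by
        simp only [mulVec, dotProduct, mul_sum]; exact sum_congr rfl fun j _ => by ring
    _ ≤ c * (r * v i) := mul_le_mul_of_nonneg_left (hAv i) hc.le
    _ = r * (c * v i) := by ring

theorem specRad_le_of_mulVec_le_s8 {n : ℕ} {A : Matrix (Fin n) (Fin n) ℝ}
    (hA : ∀ i j, 0 ≤ A i j) {v : Fin n → ℝ} (hv : ∀ i, 0 < v i) {r : ℝ} (hr : 0 ≤ r)
    (hAv : ∀ i, (A *ᵥ v) i ≤ r * v i) : specRad A ≤ r := by
  refine Real.sSup_le ?_ hr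
  rintro _ ⟨μ, hμ, rfl⟩
  obtain ⟨y, hy0, hy⟩ := exists_mulVec_eq_smul_of_mem_spectrum_s8 hμ
  exact norm_eigenvalue_le_of_mulVec_le hA hv hAv hy0 hy

noncomputable def largerRoot (c B S : ℝ) : ℝ :=
  (c - B + √((c + B) ^ 2 + 4 * B * S)) / 2

theorem largerRoot_mul_add_eq {c B S : ℝ} (h : 0 ≤ B * S) :
    largerRoot c B S * (largerRoot c B S + B) = c * (largerRoot c B S + B) + B * S := by
  have hdisc : 0 ≤ (c + B) ^ 2 + 4 * B * S := by nlinarith [sq_nonneg (c + B)]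
  unfold largerRoot
  linear_combination Real.sq_sqrt hdisc / 4

theorem le_largerRoot {c B S : ℝ} (h : 0 ≤ B * S) : c ≤ largerRoot c B S := by
  have : c + B ≤ √((c + B) ^ 2 + 4 * B * S) := Real.le_sqrt_of_sq_le (by linarith)
  unfold largerRoot
  linarith

theorem Antitone.sum_max_sub_zero {ι α : Type*} [Fintype ι] [LinearOrder ι] [AddCommGroup α]
    [LinearOrder α] [IsOrderedAddMonoid α] {m : ι → α} (hm : Antitone m) (l : ι) :
    ∑ k, max (m k - m l) 0 = ∑ k ∈ univ.filter (· < l), (m k - m l) := by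
  rw [sum_filter]
  refine sum_congr rfl fun k _ => ?_
  split_ifs with h
  · exact max_eq_left (sub_nonneg.2 (hm h.le))
  · exact max_eq_right (sub_nonpos.2 (hm (not_lt.1 h)))

theorem SimpleGraph.degree_le_div_mul_degree {V : Type*} [Fintype V] (G : SimpleGraph V)
    [DecidableRel G.Adj] {dmax dmin : ℕ} (hdmax : ∀ v, G.degree v ≤ dmax)
    (hdmin : ∀ v, dmin ≤ G.degree v) (hpos : 0 < dmin) (i j : V) :
    (G.degree j : ℝ) ≤ dmax / dmin * G.degree i := calc
  (G.degree j : ℝ) ≤ dmax := by exact_mod_cast hdmax j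
  _ = dmax / dmin * dmin := (div_mul_cancel₀ _ (by positivity)).symm
  _ ≤ dmax / dmin * G.degree i := by gcongr; exact_mod_cast hdmin i

theorem SimpleGraph.adjMatrix_mulVec_le {V : Type*} [Fintype V] [DecidableEq V]
    (G : SimpleGraph V) [DecidableRel G.Adj] (hdeg : ∀ i, 0 < G.degree i) {c B S ρ : ℝ}
    {g : V → ℝ} (hg : ∀ i, 0 ≤ g i)
    (hexcess : ∀ i, (∑ j ∈ G.neighborFinset i, (G.degree j : ℝ)) / G.degree i ≤ c + g i)
    (hB : ∀ i j, (G.degree j : ℝ) ≤ B * G.degree i) (hgS : ∑ j, g j ≤ S) (hρB : 0 ≤ ρ + B)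
    (hρ : ρ * (ρ + B) = c * (ρ + B) + B * S) (i : V) :
    (G.adjMatrix ℝ *ᵥ fun j => (ρ + B + g j) * G.degree j) i ≤
      ρ * ((ρ + B + g i) * G.degree i) := by
  have hBi : 0 ≤ B * G.degree i := (Nat.cast_nonneg _).trans (hB i i)
  have hcorr : ∑ j ∈ G.neighborFinset i, g j * G.degree j ≤ B * G.degree i * (S - g i) := calc
    ∑ j ∈ G.neighborFinset i, g j * G.degree j
      ≤ ∑ j ∈ G.neighborFinset i, B * G.degree i * g j :=
        sum_le_sum fun j _ => by rw [mul_comm]; exact mul_le_mul_of_nonneg_right (hB i j) (hg j)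
    _ ≤ ∑ j ∈ univ.erase i, B * G.degree i * g j := by
        refine sum_le_sum_of_subset_of_nonneg (fun j hj => ?_) fun j _ _ => mul_nonneg hBi (hg j)
        exact mem_erase.2 ⟨(G.mem_neighborFinset i j).1 hj |>.ne', mem_univ j⟩
    _ ≤ B * G.degree i * (S - g i) := by
        rw [← mul_sum]
        refine mul_le_mul_of_nonneg_left ?_ hBi
        linarith [sum_erase_add univ g (mem_univ i)]
  have hdeg_i : (0 : ℝ) < G.degree i := by exact_mod_cast hdeg i
  rw [adjMatrix_mulVec_apply]
  calc ∑ j ∈ G.neighborFinset i, (ρ + B + g j) * G.degree j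
      = (ρ + B) * ∑ j ∈ G.neighborFinset i, (G.degree j : ℝ) +
          ∑ j ∈ G.neighborFinset i, g j * G.degree j := by
        simp only [add_mul, sum_add_distrib, mul_sum]
    _ ≤ (ρ + B) * ((c + g i) * G.degree i) + B * G.degree i * (S - g i) :=
        add_le_add (mul_le_mul_of_nonneg_left ((div_le_iff₀ hdeg_i).1 (hexcess i)) hρB) hcorr
    _ = ρ * ((ρ + B + g i) * G.degree i) := by linear_combination (G.degree i : ℝ) * hρ.symm

theorem stmt8_general {n : ℕ} (G : SimpleGraph (Fin n)) [DecidableRel G.Adj]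
    (hiso : ∀ v, 0 < G.degree v)
    (m : Fin n → ℝ) (σ : Equiv.Perm (Fin n))
    (hm : ∀ i, m i =
      (∑ j ∈ G.neighborFinset (σ i), (G.degree j : ℝ)) / (G.degree (σ i) : ℝ))
    (hmono : Antitone m) (dmax dmin : ℕ)
    (hdmax : ∀ v, G.degree v ≤ dmax)
    (hdmin : ∀ v, dmin ≤ G.degree v) (hdmin' : ∃ v, G.degree v = dmin)
    (l : Fin n) :
    specRad (G.adjMatrix ℝ) ≤ (m l - (dmax : ℝ) / (dmin : ℝ) +
      Real.sqrt ((m l + (dmax : ℝ) / (dmin : ℝ)) ^ 2 +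
        4 * ((dmax : ℝ) / (dmin : ℝ)) *
          ∑ i ∈ Finset.univ.filter (fun i => i < l), (m i - m l))) / 2 := by
  obtain ⟨w, hw⟩ := hdmin'
  have hdmin_pos : 0 < dmin := hw ▸ hiso w
  set B := (dmax : ℝ) / dmin
  set S := ∑ i ∈ univ.filter (fun i => i < l), (m i - m l)
  set g := fun i => max (m (σ.symm i) - m l) 0
  have hB_pos : 0 < B := by
    have : 0 < dmax := (hiso l).trans_le (hdmax l)
    positivity
  have hg_sum : ∑ i, g i = S := (Equiv.sum_comp σ.symm _).trans (hmono.sum_max_sub_zero l)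
  have hexcess (i : Fin n) :
      (∑ j ∈ G.neighborFinset i, (G.degree j : ℝ)) / G.degree i ≤ m l + g i := by
    have hmi := hm (σ.symm i)
    rw [σ.apply_symm_apply] at hmi
    exact hmi ▸ le_add_of_sub_left_le (le_max_left _ 0)
  have hml : 0 ≤ m l := hm l ▸ by positivity
  have hBS : 0 ≤ B * S := mul_nonneg hB_pos.le (hg_sum ▸ sum_nonneg fun i _ => le_max_right _ _)
  have hρ : 0 ≤ largerRoot (m l) B S := hml.trans (le_largerRoot hBS)
  show specRad (G.adjMatrix ℝ) ≤ largerRoot (m l) B S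
  refine specRad_le_of_mulVec_le_s8 (fun i j => ?_) (fun i => ?_) hρ
    (G.adjMatrix_mulVec_le hiso (fun i => le_max_right _ _) hexcess
      (G.degree_le_div_mul_degree hdmax hdmin hdmin_pos) hg_sum.le (by positivity)
      (largerRoot_mul_add_eq hBS))
  · rw [SimpleGraph.adjMatrix_apply]
    exact ite_nonneg zero_le_one le_rfl
  · have : (0 : ℝ) < G.degree i := by exact_mod_cast hiso i
    have : 0 ≤ g i := le_max_right _ _
    positivity

theorem stmt8 {n : ℕ} (hn : 2 ≤ n) (G : SimpleGraph (Fin n)) [DecidableRel G.Adj]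
    (hiso : ∀ v, 0 < G.degree v)
    (m : Fin n → ℝ) (σ : Equiv.Perm (Fin n))
    (hm : ∀ i, m i =
      (∑ j ∈ G.neighborFinset (σ i), (G.degree j : ℝ)) / (G.degree (σ i) : ℝ))
    (hmono : Antitone m) (dmax dmin : ℕ)
    (hdmax : ∀ v, G.degree v ≤ dmax) (hdmax' : ∃ v, G.degree v = dmax)
    (hdmin : ∀ v, dmin ≤ G.degree v) (hdmin' : ∃ v, G.degree v = dmin)
    (l : Fin n) :
    specRad (G.adjMatrix ℝ) ≤ (m l - (dmax : ℝ) / (dmin : ℝ) +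
      Real.sqrt ((m l + (dmax : ℝ) / (dmin : ℝ)) ^ 2 +
        4 * ((dmax : ℝ) / (dmin : ℝ)) *
          ∑ i ∈ Finset.univ.filter (fun i => i < l), (m i - m l))) / 2 :=
  stmt8_general G hiso m σ hm hmono dmax dmin hdmax hdmin hdmin' l
end
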